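/- arXiv:2507.20194 — 8 statements merged into one kernel-verified Lean document; each statement's English description precedes it below -/
import Mathlib

section
/- Consider the stochastic system on the open positive quadrant X = {(ξ,η) ∈ ℝ² : ξ > 0, η > 0} with one-step map f((ξ,η),w) = ((1/2)ξ(1+η+w), (1/2)η), where the disturbance w is uniformly distributed on [−1,1]. There is no polynomial function V : ℝ² → ℝ (in two real variables) such that V(x) ≥ 0 for all x ∈ X, V(x) → ∞ as ‖x‖ → ∞ along points of X, and there exists a compact set C ⊆ ℝ² with (1/2)∫_{−1}^{1} V((1/2)ξ(1+η+w), (1/2)η) dw ≤ V(ξ,η) for all (ξ,η) ∈ X \ C. -/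
/-!
Write `V(ξ, η) = ∑ᵢ cᵢ(η) ξⁱ` with `N` its degree in `ξ`; `N ≥ 1` because `V` is unbounded along
`η = 1`. For fixed `η > 0` both sides of the drift inequality are polynomials in `ξ`, and the
inequality holds for all large `ξ`, so their `ξᴺ`-coefficients compare. With `q = c_N` and
`E[(1 + η + w)ᴺ] ≥ ηᴺ` this gives `q(η/2) (η/2)ᴺ ≤ q(η)` for `η > 0`. As `q ≥ 0` on `η > 0` and
`q ≠ 0`, the left side is a polynomial in `η` of degree `deg q + N > deg q` with positive leading
coefficient, so the inequality fails for large `η`.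
-/

open Filter MeasureTheory Polynomial Finset Bornology

namespace Polynomial

theorem leadingCoeff_nonneg_of_eventually_nonneg {q : ℝ[X]} (hq : ∀ᶠ x in atTop, 0 ≤ q.eval x) :
    0 ≤ q.leadingCoeff := by
  by_contra! hlc
  rcases le_or_gt q.degree 0 with hdeg | hdeg
  · obtain ⟨x, hx⟩ := hq.exists
    rw [eq_C_of_degree_le_zero hdeg, eval_C] at hx
    rw [leadingCoeff, natDegree_eq_zero_iff_degree_le_zero.2 hdeg] at hlc
    linarith
  · obtain ⟨x, hx, hx'⟩ :=
      ((q.tendsto_atBot_of_leadingCoeff_nonpos hdeg hlc.le).eventually_lt_atBot 0 |>.and hq).exists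
    linarith

theorem coeff_nonneg_of_eventually_nonneg {q : ℝ[X]} {n : ℕ} (hn : q.natDegree ≤ n)
    (hq : ∀ᶠ x in atTop, 0 ≤ q.eval x) : 0 ≤ q.coeff n := by
  rcases hn.lt_or_eq with hlt | rfl
  · rw [coeff_eq_zero_of_natDegree_lt hlt]
  · exact leadingCoeff_nonneg_of_eventually_nonneg hq

theorem eq_zero_of_eval_mul_eval_comp_le {q r : ℝ[X]} {c : ℝ} (hc : 0 < c) (hr : 0 < r.degree)
    (hr' : 0 < r.leadingCoeff) (hq : ∀ᶠ x in atTop, 0 ≤ q.eval x)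
    (h : ∀ᶠ x in atTop, q.eval (c * x) * r.eval x ≤ q.eval x) : q = 0 := by
  by_contra hq0
  set G := q.comp (C c * X) * r
  have hcX : (C c * X).natDegree = 1 := natDegree_C_mul_X c hc.ne'
  have hG_lc : G.leadingCoeff = q.leadingCoeff * c ^ q.natDegree * r.leadingCoeff := by
    rw [leadingCoeff_mul, leadingCoeff_comp (by rw [hcX]; exact one_ne_zero), leadingCoeff_C_mul_X]
  have hG_lc_pos : 0 < G.leadingCoeff := by
    have := (leadingCoeff_nonneg_of_eventually_nonneg hq).lt_of_ne' (leadingCoeff_ne_zero.2 hq0)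
    rw [hG_lc]; positivity
  have hG0 : G ≠ 0 := leadingCoeff_ne_zero.1 hG_lc_pos.ne'
  have hdeg : q.degree < G.degree := by
    have hr0 : r ≠ 0 := ne_zero_of_degree_gt hr
    rw [degree_eq_natDegree hq0, degree_eq_natDegree hG0,
      natDegree_mul (mul_ne_zero_iff.1 hG0).1 hr0, natDegree_comp, hcX, mul_one]
    exact_mod_cast Nat.lt_add_of_pos_right (natDegree_pos_iff_degree_pos.2 hr)
  have hbot := (q - G).tendsto_atBot_of_leadingCoeff_nonpos
    (by rw [degree_sub_eq_right_of_degree_lt hdeg]; exact (zero_le_degree_iff.2 hq0).trans_lt hdeg)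
    (by rw [leadingCoeff_sub_of_degree_lt' hdeg]; linarith)
  obtain ⟨x, hx, hx'⟩ := ((hbot.eventually_lt_atBot 0).and h).exists
  simp only [eval_sub, eval_mul, eval_comp, eval_C, eval_X, sub_neg, G] at hx
  linarith

end Polynomial

theorem nonneg_of_eventually_sum_mul_pow_nonneg (c : ℕ → ℝ) (n : ℕ)
    (h : ∀ᶠ x in atTop, 0 ≤ ∑ i ∈ range (n + 1), c i * x ^ i) : 0 ≤ c n := by
  have hcoeff : (∑ i ∈ range (n + 1), C (c i) * X ^ i).coeff n = c n := by simp
  rw [← hcoeff]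
  refine coeff_nonneg_of_eventually_nonneg ?_ (by simpa [eval_finsetSum] using h)
  exact natDegree_sum_le_of_forall_le _ _ fun i hi =>
    (natDegree_C_mul_X_pow_le _ _).trans (Nat.lt_succ_iff.1 (mem_range.1 hi))

theorem le_of_eventually_sum_mul_pow_le (c d : ℕ → ℝ) (n : ℕ)
    (h : ∀ᶠ x in atTop, ∑ i ∈ range (n + 1), d i * x ^ i ≤ ∑ i ∈ range (n + 1), c i * x ^ i) :
    d n ≤ c n :=
  sub_nonneg.1 <| nonneg_of_eventually_sum_mul_pow_nonneg (fun i => c i - d i) n <|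
    h.mono fun x hx => by simpa only [sub_mul, sum_sub_distrib, sub_nonneg]

theorem MvPolynomial.exists_eval_fin_two_eq_sum {R : Type*} [CommRing R]
    (p : MvPolynomial (Fin 2) R) : ∃ P : R[X][X], ∀ a b : R,
      eval ![a, b] p = ∑ i ∈ range (P.natDegree + 1), (P.coeff i).eval b * a ^ i := by
  refine ⟨aeval ![(Polynomial.X : R[X][X]), Polynomial.C Polynomial.X] p, fun a b => ?_⟩
  have : eval ![a, b] p = ((aeval ![(Polynomial.X : R[X][X]), Polynomial.C Polynomial.X] p).map
      (evalRingHom b)).eval a := by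
    induction p using MvPolynomial.induction_on with
    | C r => simp
    | add p q hp hq => simp [hp, hq]
    | mul_X p i hp => fin_cases i <;> simp [hp]
  rw [this, eval_eq_sum_range' (Nat.lt_succ_of_le natDegree_map_le)]
  simp

noncomputable def shiftedMoment (b : ℝ) (i : ℕ) : ℝ := (1 / 2) * ∫ w in (-1 : ℝ)..1, (1 + b + w) ^ i

theorem pow_le_shiftedMoment {b : ℝ} (hb : 0 ≤ b) (i : ℕ) : b ^ i ≤ shiftedMoment b i := by
  have : ∫ w in (-1 : ℝ)..1, b ^ i ≤ ∫ w in (-1 : ℝ)..1, (1 + b + w) ^ i :=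
    intervalIntegral.integral_mono_on (by norm_num) intervalIntegrable_const
      (Continuous.intervalIntegrable (by fun_prop) _ _)
      fun w hw => pow_le_pow_left₀ hb (by linarith [hw.1]) i
  rw [shiftedMoment]
  simp only [intervalIntegral.integral_const, sub_neg_eq_add, smul_eq_mul] at this
  linarith

theorem half_integral_sum_mul_pow (c : ℕ → ℝ) (k b : ℝ) (n : ℕ) :
    (1 / 2) * ∫ w in (-1 : ℝ)..1, ∑ i ∈ range n, c i * (k * (1 + b + w)) ^ i
      = ∑ i ∈ range n, c i * shiftedMoment b i * k ^ i := by
  rw [intervalIntegral.integral_finsetSum fun i _ =>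
    Continuous.intervalIntegrable (by fun_prop) _ _, mul_sum]
  refine sum_congr rfl fun i _ => ?_
  simp_rw [mul_pow, ← mul_assoc, intervalIntegral.integral_const_mul, shiftedMoment]
  ring

theorem eq_zero_of_eval_half_mul_shiftedMoment_le {q : ℝ[X]} {N : ℕ} (hN : N ≠ 0)
    (hq : ∀ b, 0 < b → 0 ≤ q.eval b)
    (h : ∀ b, 0 < b → q.eval ((1 / 2) * b) * shiftedMoment b N * (1 / 2) ^ N ≤ q.eval b) :
    q = 0 := by
  refine eq_zero_of_eval_mul_eval_comp_le (c := 1 / 2) (r := C ((1 / 2) ^ N) * X ^ N)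
    (by norm_num) ?_ ?_ ?_ ?_
  · rw [degree_C_mul_X_pow N (by positivity)]
    exact_mod_cast Nat.pos_of_ne_zero hN
  · rw [leadingCoeff_C_mul_X_pow]
    positivity
  · filter_upwards [eventually_gt_atTop 0] using hq
  · filter_upwards [eventually_gt_atTop 0] with b hb
    calc q.eval ((1 / 2) * b) * (C ((1 / 2 : ℝ) ^ N) * X ^ N).eval b
        = q.eval ((1 / 2) * b) * b ^ N * (1 / 2) ^ N := by
          simp only [eval_mul, eval_C, eval_pow, eval_X]; ring
      _ ≤ q.eval ((1 / 2) * b) * shiftedMoment b N * (1 / 2) ^ N := by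
        gcongr
        · exact hq _ (by positivity)
        · exact pow_le_shiftedMoment hb.le N
      _ ≤ q.eval b := h b hb

theorem tendsto_prodMk_const_cobounded (b : ℝ) :
    Tendsto (fun a : ℝ => (a, b)) atTop (cobounded (ℝ × ℝ)) := by
  rw [cobounded_prod]
  refine Tendsto.mono_right ?_ le_sup_left
  exact tendsto_comap_iff.2 <| tendsto_id.mono_right IsOrderBornology.atTop_le_cobounded

theorem tendsto_prodMk_const_quadrant {b : ℝ} (hb : 0 < b) :
    Tendsto (fun a : ℝ => (a, b)) atTop (cobounded (ℝ × ℝ) ⊓ 𝓟 {x | 0 < x.1 ∧ 0 < x.2}) :=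
  tendsto_inf.2 ⟨tendsto_prodMk_const_cobounded b, tendsto_principal.2 <|
    (eventually_gt_atTop 0).mono fun _ ha => ⟨ha, hb⟩⟩

/-- There is no polynomial drift certificate for the system
`f((ξ,η),w) = ((1/2)ξ(1+η+w), (1/2)η)` with `w` uniform on `[-1,1]`,
on the open positive quadrant `X = {(ξ,η) | ξ > 0, η > 0}`. -/
theorem no_polynomial_drift_certificate :
    ¬ ∃ (p : MvPolynomial (Fin 2) ℝ) (C : Set (ℝ × ℝ)),
        IsCompact C ∧
        (∀ x : ℝ × ℝ, 0 < x.1 → 0 < x.2 → 0 ≤ MvPolynomial.eval ![x.1, x.2] p) ∧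
        Tendsto (fun x : ℝ × ℝ => MvPolynomial.eval ![x.1, x.2] p)
          (comap (fun x : ℝ × ℝ => ‖x‖) atTop ⊓ 𝓟 {x : ℝ × ℝ | 0 < x.1 ∧ 0 < x.2}) atTop ∧
        (∀ x : ℝ × ℝ, 0 < x.1 → 0 < x.2 → x ∉ C →
          (1 / 2) * (∫ w in (-1 : ℝ)..1,
              MvPolynomial.eval ![(1 / 2) * x.1 * (1 + x.2 + w), (1 / 2) * x.2] p)
            ≤ MvPolynomial.eval ![x.1, x.2] p) := by
  rintro ⟨p, K, hK, hV_nonneg, hV_tendsto, hdrift⟩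
  rw [comap_norm_atTop] at hV_tendsto
  obtain ⟨P, hP⟩ := MvPolynomial.exists_eval_fin_two_eq_sum p
  set N := P.natDegree
  have hN : N ≠ 0 := by
    intro hN
    have := hV_tendsto.comp (tendsto_prodMk_const_quadrant one_pos)
    simp only [Function.comp_def, hP, hN, zero_add, range_one, sum_singleton, pow_zero, mul_one]
      at this
    exact not_tendsto_const_atTop _ _ this
  have hq_nonneg (b : ℝ) (hb : 0 < b) : 0 ≤ P.leadingCoeff.eval b :=
    nonneg_of_eventually_sum_mul_pow_nonneg (fun i => (P.coeff i).eval b) N <| by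
      filter_upwards [eventually_gt_atTop 0] with a ha
      exact hP a b ▸ hV_nonneg (a, b) ha hb
  have hq_drift (b : ℝ) (hb : 0 < b) :
      P.leadingCoeff.eval ((1 / 2) * b) * shiftedMoment b N * (1 / 2) ^ N
        ≤ P.leadingCoeff.eval b := by
    refine le_of_eventually_sum_mul_pow_le (fun i => (P.coeff i).eval b)
      (fun i => (P.coeff i).eval ((1 / 2) * b) * shiftedMoment b i * (1 / 2) ^ i) N ?_
    filter_upwards [eventually_gt_atTop 0,
      (tendsto_prodMk_const_cobounded b).eventually hK.isBounded] with a ha haK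
    have := hdrift (a, b) ha hb haK
    simp only [hP, half_integral_sum_mul_pow] at this
    simpa only [mul_pow, ← mul_assoc] using this
  have hP0 : P ≠ 0 := fun h => hN (by simp [N, h])
  exact leadingCoeff_ne_zero.2 hP0 (eq_zero_of_eval_half_mul_shiftedMoment_le hN hq_nonneg hq_drift)
end

section
/- Let p : ℝ × ℝ → ℝ be a polynomial function in two real variables and let u ≥ 1 be such that p(ξ, u) → ∞ as ξ → ∞. Then for all sufficiently large i ∈ ℕ, p(u^i · 2^{i(i+1)/2}, u) > p(2^i, 2^i·u). -/
open Filter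

private lemma aux_eval_aeval (u : ℝ) (p : MvPolynomial (Fin 2) ℝ) (ξ : ℝ) :
    Polynomial.eval ξ (MvPolynomial.aeval ![Polynomial.X, Polynomial.C u] p)
      = MvPolynomial.eval ![ξ, u] p := by
  induction p using MvPolynomial.induction_on with
  | C a => simp
  | add p q hp hq => simp [hp, hq]
  | mul_X p n hp => fin_cases n <;> simp [hp]

private lemma aux_eval_le_bound (p : MvPolynomial (Fin 2) ℝ) (v : Fin 2 → ℝ) (M : ℝ)
    (hM : 1 ≤ M) (hv : ∀ j, 0 ≤ v j) (hv' : ∀ j, v j ≤ M) :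
    MvPolynomial.eval v p ≤
      (∑ m ∈ p.support, |MvPolynomial.coeff m p|) * M ^ p.totalDegree := by
  rw [MvPolynomial.eval_eq', Finset.sum_mul]
  refine Finset.sum_le_sum fun m hm => ?_
  have h1 : ∏ i, v i ^ m i ≤ M ^ p.totalDegree := by
    calc ∏ i, v i ^ m i ≤ ∏ i, M ^ m i :=
          Finset.prod_le_prod (fun i _ => pow_nonneg (hv i) _)
            (fun i _ => pow_le_pow_left₀ (hv i) (hv' i) _)
      _ = M ^ (∑ i, m i) := by rw [← Finset.prod_pow_eq_pow_sum]
      _ ≤ M ^ p.totalDegree := by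
          apply pow_le_pow_right₀ hM
          have := MvPolynomial.le_totalDegree hm
          rwa [Finsupp.sum_fintype _ _ (fun _ => rfl)] at this
  have h0 : 0 ≤ ∏ i, v i ^ m i := Finset.prod_nonneg fun i _ => pow_nonneg (hv i) _
  calc MvPolynomial.coeff m p * ∏ i, v i ^ m i
      ≤ |MvPolynomial.coeff m p| * ∏ i, v i ^ m i :=
        mul_le_mul_of_nonneg_right (le_abs_self _) h0
    _ ≤ |MvPolynomial.coeff m p| * M ^ p.totalDegree :=
        mul_le_mul_of_nonneg_left h1 (abs_nonneg _)

private lemma aux_exists_lin_lower (q : Polynomial ℝ)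
    (hq : Tendsto (fun x => q.eval x) atTop atTop) :
    ∃ c > 0, ∀ᶠ x : ℝ in atTop, c * x ≤ q.eval x := by
  obtain ⟨hdeg, hlead⟩ := (Polynomial.tendsto_atTop_iff_leadingCoeff_nonneg q).mp hq
  have hq0 : q ≠ 0 := fun h0 => by simp [h0] at hdeg
  have hlead' : 0 < q.leadingCoeff :=
    lt_of_le_of_ne hlead (Ne.symm (Polynomial.leadingCoeff_ne_zero.mpr hq0))
  have hnd : 1 ≤ q.natDegree := Polynomial.natDegree_pos_iff_degree_pos.mpr hdeg
  refine ⟨q.leadingCoeff / 2, by positivity, ?_⟩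
  have hlo : (fun x => q.eval x - q.leadingCoeff * x ^ q.natDegree)
      =o[atTop] fun x => q.leadingCoeff * x ^ q.natDegree :=
    (Polynomial.isEquivalent_atTop_lead q).isLittleO
  have hev := hlo.def (by norm_num : (0:ℝ) < 1/2)
  filter_upwards [hev, eventually_ge_atTop (1 : ℝ)] with x hx hx1
  have hx0 : (0:ℝ) ≤ x := by linarith
  have hg : 0 < q.leadingCoeff * x ^ q.natDegree := by positivity
  rw [Real.norm_eq_abs, Real.norm_eq_abs, abs_of_pos hg] at hx
  have habs := abs_le.mp hx
  have hpow : x ^ 1 ≤ x ^ q.natDegree := pow_le_pow_right₀ hx1 hnd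
  rw [pow_one] at hpow
  nlinarith [habs.1, hlead'.le]

/-- If a two-variable real polynomial `p` satisfies `p(ξ,u) → ∞` as `ξ → ∞` for some
fixed `u ≥ 1`, then eventually `p(u^i·2^{i(i+1)/2}, u) > p(2^i, 2^i·u)`. -/
theorem polynomial_superexp_dominates (p : MvPolynomial (Fin 2) ℝ) (u : ℝ) (hu : 1 ≤ u)
    (hp : Tendsto (fun ξ : ℝ => MvPolynomial.eval ![ξ, u] p) atTop atTop) :
    ∀ᶠ i : ℕ in atTop,
      MvPolynomial.eval ![(2 : ℝ) ^ i, 2 ^ i * u] p <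
        MvPolynomial.eval ![u ^ i * 2 ^ (i * (i + 1) / 2), u] p := by
  set q : Polynomial ℝ := MvPolynomial.aeval ![Polynomial.X, Polynomial.C u] p with hqdef
  have heval : ∀ ξ : ℝ, q.eval ξ = MvPolynomial.eval ![ξ, u] p := aux_eval_aeval u p
  have hq : Tendsto (fun x => q.eval x) atTop atTop := by
    have : (fun x : ℝ => q.eval x) = fun ξ : ℝ => MvPolynomial.eval ![ξ, u] p :=
      funext heval
    rw [this]; exact hp
  obtain ⟨c, hc, hev⟩ := aux_exists_lin_lower q hq
  set C : ℝ := ∑ m ∈ p.support, |MvPolynomial.coeff m p| with hCdef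
  have hC0 : 0 ≤ C := Finset.sum_nonneg fun m _ => abs_nonneg _
  set D : ℕ := p.totalDegree with hDdef
  -- the super-exponential sequence
  set x : ℕ → ℝ := fun i => u ^ i * 2 ^ (i * (i + 1) / 2) with hxdef
  have hxlb : ∀ i : ℕ, (2:ℝ) ^ i ≤ x i := by
    intro i
    have h1 : (1:ℝ) ≤ u ^ i := one_le_pow₀ hu
    have h2 : i ≤ i * (i + 1) / 2 := by
      rcases Nat.eq_zero_or_pos i with h | h
      · simp [h]
      · rw [Nat.le_div_iff_mul_le (by norm_num)]
        nlinarith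
    have h3 : (2:ℝ) ^ i ≤ 2 ^ (i * (i + 1) / 2) := pow_le_pow_right₀ one_le_two h2
    calc (2:ℝ) ^ i ≤ 2 ^ (i * (i + 1) / 2) := h3
      _ = 1 * 2 ^ (i * (i + 1) / 2) := (one_mul _).symm
      _ ≤ u ^ i * 2 ^ (i * (i + 1) / 2) :=
        mul_le_mul_of_nonneg_right h1 (by positivity)
  have htwo : Tendsto (fun i : ℕ => (2:ℝ) ^ i) atTop atTop :=
    tendsto_pow_atTop_atTop_of_one_lt one_lt_two
  have htx : Tendsto x atTop atTop :=
    tendsto_atTop_mono hxlb htwo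
  have hcx : Tendsto (fun i : ℕ => c * 2 ^ i) atTop atTop :=
    htwo.const_mul_atTop hc
  filter_upwards [htx.eventually hev, eventually_ge_atTop (2 * D + 1),
    hcx.eventually_gt_atTop (C * u ^ D)] with i hqx hiD hcC
  -- upper bound the left side
  have hM1 : (1:ℝ) ≤ 2 ^ i * u := by
    have : (1:ℝ) ≤ 2 ^ i := one_le_pow₀ one_le_two
    nlinarith
  have hub : MvPolynomial.eval ![(2 : ℝ) ^ i, 2 ^ i * u] p ≤ C * (2 ^ i * u) ^ D := by
    apply aux_eval_le_bound
    · exact hM1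
    · intro j; fin_cases j <;> simp <;> positivity
    · intro j; fin_cases j
      · simpa using le_mul_of_one_le_right (by positivity : (0:ℝ) ≤ 2 ^ i) hu
      · simp
  -- lower bound the right side
  have hlb : c * x i ≤ MvPolynomial.eval ![u ^ i * 2 ^ (i * (i + 1) / 2), u] p := by
    rw [← heval]; exact hqx
  -- compare the bounds
  have hcomp : C * (2 ^ i * u) ^ D < c * x i := by
    have hstep : i * D + i ≤ i * (i + 1) / 2 := by
      rw [Nat.le_div_iff_mul_le (by norm_num)]
      nlinarith
    have h1 : (2:ℝ) ^ (i * D + i) ≤ 2 ^ (i * (i + 1) / 2) :=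
      pow_le_pow_right₀ one_le_two hstep
    have h2 : c * (2:ℝ) ^ (i * (i + 1) / 2) ≤ c * x i := by
      have h1u : (1:ℝ) ≤ u ^ i := one_le_pow₀ hu
      have h2' : (2:ℝ) ^ (i * (i + 1) / 2) ≤ x i := by
        rw [hxdef]
        exact le_mul_of_one_le_left (by positivity) h1u
      exact mul_le_mul_of_nonneg_left h2' hc.le
    calc C * (2 ^ i * u) ^ D = (C * u ^ D) * 2 ^ (i * D) := by
          rw [mul_pow, ← pow_mul]; ring
      _ < (c * 2 ^ i) * 2 ^ (i * D) := by
          have : (0:ℝ) < (2:ℝ) ^ (i * D) := by positivity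
          exact mul_lt_mul_of_pos_right hcC this
      _ = c * 2 ^ (i * D + i) := by rw [pow_add]; ring
      _ ≤ c * 2 ^ (i * (i + 1) / 2) :=
          mul_le_mul_of_nonneg_left h1 hc.le
      _ ≤ c * x i := h2
  calc MvPolynomial.eval ![(2 : ℝ) ^ i, 2 ^ i * u] p ≤ C * (2 ^ i * u) ^ D := hub
    _ < c * x i := hcomp
    _ ≤ _ := hlb
end

section
/- For all real ξ > 0 and η > 0, the inequality (1/2)∫_{−1}^{1} [ ln(1 + (ξ/2)(1+η+w)) + (η/2)² ] dw ≤ ln(1+ξ) + η² holds. -/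
open MeasureTheory

/-- Drift verification for `V(ξ,η) = ln(1+ξ) + η²` along
`f((ξ,η),w) = ((1/2)ξ(1+η+w), (1/2)η)` with `w` uniform on `[-1,1]`. -/
theorem log_drift_inequality (ξ η : ℝ) (hξ : 0 < ξ) (hη : 0 < η) :
    (1 / 2) * (∫ w in (-1 : ℝ)..1,
        (Real.log (1 + (ξ / 2) * (1 + η + w)) + (η / 2) ^ 2)) ≤
      Real.log (1 + ξ) + η ^ 2 := by
  set c : ℝ := 1 + (ξ / 2) * (1 + η) with hc
  have hcpos : 0 < c := by positivity
  -- integrability of the LHS integrand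
  have hint1 : IntervalIntegrable
      (fun w => Real.log (1 + (ξ / 2) * (1 + η + w)) + (η / 2) ^ 2)
      volume (-1) 1 := by
    apply ContinuousOn.intervalIntegrable
    apply ContinuousOn.add _ continuousOn_const
    apply ContinuousOn.log
    · fun_prop
    · intro w hw
      rw [Set.uIcc_of_le (by norm_num)] at hw
      have h1 : (-1 : ℝ) ≤ w := hw.1
      nlinarith
  -- integrability of the linear majorant
  have hint2 : IntervalIntegrable
      (fun w => Real.log c + (ξ / (2 * c)) * w + (η / 2) ^ 2)
      volume (-1) 1 := by
    apply Continuous.intervalIntegrable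
    fun_prop
  -- pointwise bound
  have hmono : (∫ w in (-1 : ℝ)..1,
        (Real.log (1 + (ξ / 2) * (1 + η + w)) + (η / 2) ^ 2)) ≤
      ∫ w in (-1 : ℝ)..1, (Real.log c + (ξ / (2 * c)) * w + (η / 2) ^ 2) := by
    apply intervalIntegral.integral_mono_on (by norm_num) hint1 hint2
    intro w hw
    have h1 : (-1 : ℝ) ≤ w := hw.1
    have hx : 0 < 1 + (ξ / 2) * (1 + η + w) := by nlinarith
    have key : Real.log (1 + (ξ / 2) * (1 + η + w)) ≤
        Real.log c + (ξ / (2 * c)) * w := by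
      have h := Real.log_le_sub_one_of_pos
        (show 0 < (1 + (ξ / 2) * (1 + η + w)) / c by positivity)
      rw [Real.log_div (ne_of_gt hx) (ne_of_gt hcpos)] at h
      have heq : (1 + (ξ / 2) * (1 + η + w)) / c - 1 = (ξ / (2 * c)) * w := by
        field_simp
        ring
      linarith [heq ▸ h]
    linarith
  -- compute the RHS integral
  have hcalc : (∫ w in (-1 : ℝ)..1,
      (Real.log c + (ξ / (2 * c)) * w + (η / 2) ^ 2)) =
      2 * Real.log c + 2 * (η / 2) ^ 2 := by
    have h1 : IntervalIntegrable (fun _ : ℝ => Real.log c + (η / 2) ^ 2)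
        volume (-1) 1 := intervalIntegrable_const
    have h2 : IntervalIntegrable (fun w : ℝ => (ξ / (2 * c)) * w)
        volume (-1) 1 := by apply Continuous.intervalIntegrable; fun_prop
    have : (fun w : ℝ => Real.log c + (ξ / (2 * c)) * w + (η / 2) ^ 2) =
        (fun w : ℝ => (Real.log c + (η / 2) ^ 2) + (ξ / (2 * c)) * w) := by
      funext w; ring
    rw [this, intervalIntegral.integral_add h1 h2,
      intervalIntegral.integral_const, intervalIntegral.integral_const_mul,
      integral_id]
    norm_num
    ring
  -- final logarithm estimate
  have hlog : Real.log c ≤ Real.log (1 + ξ) + 3 * η ^ 2 / 4 := by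
    have h := Real.log_le_sub_one_of_pos
      (show 0 < c / (1 + ξ) by positivity)
    rw [Real.log_div (ne_of_gt hcpos) (by positivity)] at h
    have h2 : c / (1 + ξ) - 1 ≤ 3 * η ^ 2 / 4 := by
      rw [div_sub_one (by positivity : (1 : ℝ) + ξ ≠ 0),
        div_le_iff₀ (by positivity)]
      nlinarith [mul_nonneg hξ.le (sq_nonneg (η - 1 / 3)), sq_nonneg η]
    linarith
  calc (1 / 2) * (∫ w in (-1 : ℝ)..1,
        (Real.log (1 + (ξ / 2) * (1 + η + w)) + (η / 2) ^ 2))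
      ≤ (1 / 2) * (2 * Real.log c + 2 * (η / 2) ^ 2) := by
        rw [← hcalc]; linarith
    _ = Real.log c + (η / 2) ^ 2 := by ring
    _ ≤ Real.log (1 + ξ) + η ^ 2 := by nlinarith
end

section
/- Let A ∈ ℝ^{n×n}, B ∈ ℝ^{n×m}, let Q ∈ ℝ^{n×n} be symmetric, let ε > 0 satisfy xᵀ(AᵀQA − Q)x ≤ −ε‖x‖² for all x ∈ ℝⁿ, and let w be a zero-mean square-integrable random vector in ℝ^m with covariance matrix Σ_w = E[w wᵀ]. Then for every x ∈ ℝⁿ with ‖x‖² > tr(BᵀQBΣ_w)/ε, one has E[(Ax+Bw)ᵀQ(Ax+Bw)] ≤ xᵀQx. -/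
open Matrix MeasureTheory

/-!
Expanding `(y + Bw)ᵀQ(y + Bw)`, the terms linear in `w` have mean zero and
`E[wᵀMw] = Σᵢⱼ Mᵢⱼ E[wᵢwⱼ] = tr(MΣ_w)`, so `E[V(Ax + Bw)] = xᵀAᵀQAx + tr(BᵀQBΣ_w)`.
The decrease hypothesis bounds this by `xᵀQx - ε‖x‖² + tr(BᵀQBΣ_w)`, which is at most `xᵀQx`
once `ε‖x‖² > tr(BᵀQBΣ_w)`.
-/

section Algebra

variable {R ι κ : Type*} [CommSemiring R] [Fintype ι] [Fintype κ]

lemma dotProduct_mulVec_self_eq_sum (M : Matrix ι ι R) (z : ι → R) :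
    z ⬝ᵥ M *ᵥ z = ∑ i, ∑ j, M i j * (z i * z j) := by
  simp only [dotProduct, mulVec, Finset.mul_sum]
  exact Finset.sum_congr rfl fun i _ => Finset.sum_congr rfl fun j _ => by ring

lemma mulVec_dotProduct_mulVec_mulVec (Q : Matrix κ κ R) (B : Matrix κ ι R) (z : ι → R) :
    B *ᵥ z ⬝ᵥ Q *ᵥ (B *ᵥ z) = z ⬝ᵥ (Bᵀ * Q * B) *ᵥ z := by
  rw [Matrix.mul_assoc, ← mulVec_mulVec, dotProduct_transpose_mulVec, dotProduct_comm,
    mulVec_mulVec]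

lemma add_mulVec_dotProduct_mulVec_add_mulVec (Q : Matrix κ κ R) (B : Matrix κ ι R)
    (y : κ → R) (z : ι → R) :
    (y + B *ᵥ z) ⬝ᵥ Q *ᵥ (y + B *ᵥ z) =
      y ⬝ᵥ Q *ᵥ y + (y ᵥ* (Q * B) + (Bᵀ * Q) *ᵥ y) ⬝ᵥ z + z ⬝ᵥ (Bᵀ * Q * B) *ᵥ z := by
  have hlin : y ⬝ᵥ Q *ᵥ (B *ᵥ z) = y ᵥ* (Q * B) ⬝ᵥ z := by
    rw [mulVec_mulVec, dotProduct_mulVec]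
  have hcross : B *ᵥ z ⬝ᵥ Q *ᵥ y = (Bᵀ * Q) *ᵥ y ⬝ᵥ z := by
    rw [dotProduct_comm, dotProduct_mulVec, ← mulVec_transpose, mulVec_mulVec]
  rw [mulVec_add, dotProduct_add, add_dotProduct, add_dotProduct, hlin, hcross,
    mulVec_dotProduct_mulVec_mulVec, add_dotProduct]
  ring

end Algebra

section RandomVector

variable {Ω ι κ : Type*} [MeasurableSpace Ω] {μ : Measure Ω} [Fintype ι] [Fintype κ]
  {w : Ω → ι → ℝ}

lemma integrable_dotProduct (hw : ∀ i, Integrable (fun ω => w ω i) μ) (c : ι → ℝ) :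
    Integrable (fun ω => c ⬝ᵥ w ω) μ :=
  integrable_finsetSum _ fun i _ => (hw i).const_mul (c i)

lemma integral_dotProduct (hw : ∀ i, Integrable (fun ω => w ω i) μ) (c : ι → ℝ) :
    ∫ ω, c ⬝ᵥ w ω ∂μ = c ⬝ᵥ fun i => ∫ ω, w ω i ∂μ := by
  simp only [dotProduct]
  rw [integral_finsetSum _ fun i _ => (hw i).const_mul (c i)]
  simp only [integral_const_mul]

lemma integrable_dotProduct_mulVec_self (hw : ∀ i, MemLp (fun ω => w ω i) 2 μ)
    (M : Matrix ι ι ℝ) : Integrable (fun ω => w ω ⬝ᵥ M *ᵥ w ω) μ := by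
  simp only [dotProduct_mulVec_self_eq_sum]
  exact integrable_finsetSum _ fun i _ => integrable_finsetSum _ fun j _ =>
    ((hw i).integrable_mul (hw j)).const_mul (M i j)

lemma integral_dotProduct_mulVec_self (hw : ∀ i, MemLp (fun ω => w ω i) 2 μ)
    (M S : Matrix ι ι ℝ) (hS : ∀ i j, ∫ ω, w ω i * w ω j ∂μ = S i j) :
    ∫ ω, w ω ⬝ᵥ M *ᵥ w ω ∂μ = (M * S).trace := by
  have hprod (i j : ι) : Integrable (fun ω => M i j * (w ω i * w ω j)) μ :=
    ((hw i).integrable_mul (hw j)).const_mul (M i j)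
  simp only [dotProduct_mulVec_self_eq_sum]
  rw [integral_finsetSum _ fun i _ => integrable_finsetSum _ fun j _ => hprod i j]
  simp only [trace, diag, mul_apply]
  refine Finset.sum_congr rfl fun i _ => ?_
  rw [integral_finsetSum _ fun j _ => hprod i j]
  refine Finset.sum_congr rfl fun j _ => ?_
  rw [integral_const_mul, ← hS j i]
  simp only [mul_comm]

lemma integral_add_mulVec_dotProduct_mulVec_add_mulVec [IsProbabilityMeasure μ]
    (hw : ∀ i, MemLp (fun ω => w ω i) 2 μ) (hmean : ∀ i, ∫ ω, w ω i ∂μ = 0)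
    (S : Matrix ι ι ℝ) (hS : ∀ i j, ∫ ω, w ω i * w ω j ∂μ = S i j)
    (Q : Matrix κ κ ℝ) (B : Matrix κ ι ℝ) (y : κ → ℝ) :
    ∫ ω, (y + B *ᵥ w ω) ⬝ᵥ Q *ᵥ (y + B *ᵥ w ω) ∂μ = y ⬝ᵥ Q *ᵥ y + (Bᵀ * Q * B * S).trace := by
  have hw₁ (i : ι) : Integrable (fun ω => w ω i) μ := (hw i).integrable one_le_two
  simp_rw [add_mulVec_dotProduct_mulVec_add_mulVec]
  rw [integral_add ?_ (integrable_dotProduct_mulVec_self hw _),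
    integral_add (integrable_const _) (integrable_dotProduct hw₁ _), integral_const,
    integral_dotProduct hw₁, integral_dotProduct_mulVec_self hw _ S hS]
  · simp [hmean]
  · exact (integrable_const _).add (integrable_dotProduct hw₁ _)

end RandomVector

theorem quadratic_drift_outside_compact_general {n m : ℕ} {Ω : Type*} [MeasurableSpace Ω]
    (μ : Measure Ω) [IsProbabilityMeasure μ]
    (A : Matrix (Fin n) (Fin n) ℝ) (B : Matrix (Fin n) (Fin m) ℝ)
    (Q : Matrix (Fin n) (Fin n) ℝ)
    (ε : ℝ) (hε : 0 < ε)
    (hdecr : ∀ x : Fin n → ℝ, x ⬝ᵥ (Aᵀ * Q * A - Q).mulVec x ≤ -ε * (x ⬝ᵥ x))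
    (w : Ω → Fin m → ℝ)
    (hL2 : ∀ i, MemLp (fun ω => w ω i) 2 μ)
    (hmean : ∀ i, ∫ ω, w ω i ∂μ = 0)
    (Sw : Matrix (Fin m) (Fin m) ℝ)
    (hcov : ∀ i j, ∫ ω, w ω i * w ω j ∂μ = Sw i j) :
    ∀ x : Fin n → ℝ, (Bᵀ * Q * B * Sw).trace / ε < x ⬝ᵥ x →
      ∫ ω, (A.mulVec x + B.mulVec (w ω)) ⬝ᵥ Q.mulVec (A.mulVec x + B.mulVec (w ω)) ∂μ ≤
        x ⬝ᵥ Q.mulVec x := by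
  intro x hx
  rw [integral_add_mulVec_dotProduct_mulVec_add_mulVec hL2 hmean Sw hcov,
    mulVec_dotProduct_mulVec_mulVec]
  have hnoise : (Bᵀ * Q * B * Sw).trace < ε * (x ⬝ᵥ x) := (div_lt_iff₀' hε).mp hx
  have hdrift := hdecr x
  rw [sub_mulVec, dotProduct_sub] at hdrift
  linarith

/-- Drift criterion V1 for the linear stochastic system `x⁺ = Ax + Bw` with quadratic
drift `V(x) = xᵀQx`: if `xᵀ(AᵀQA - Q)x ≤ -ε‖x‖²` for all `x`, then
`E[V(Ax+Bw)] ≤ V(x)` whenever `‖x‖² > tr(BᵀQBΣw)/ε`. -/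
theorem quadratic_drift_outside_compact {n m : ℕ} {Ω : Type*} [MeasurableSpace Ω]
    (μ : Measure Ω) [IsProbabilityMeasure μ]
    (A : Matrix (Fin n) (Fin n) ℝ) (B : Matrix (Fin n) (Fin m) ℝ)
    (Q : Matrix (Fin n) (Fin n) ℝ) (hQ : Q.IsSymm)
    (ε : ℝ) (hε : 0 < ε)
    (hdecr : ∀ x : Fin n → ℝ, x ⬝ᵥ (Aᵀ * Q * A - Q).mulVec x ≤ -ε * (x ⬝ᵥ x))
    (w : Ω → Fin m → ℝ) (hmeas : Measurable w)
    (hL2 : ∀ i, MemLp (fun ω => w ω i) 2 μ)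
    (hmean : ∀ i, ∫ ω, w ω i ∂μ = 0)
    (Sw : Matrix (Fin m) (Fin m) ℝ)
    (hcov : ∀ i j, ∫ ω, w ω i * w ω j ∂μ = Sw i j) :
    ∀ x : Fin n → ℝ, (Bᵀ * Q * B * Sw).trace / ε < x ⬝ᵥ x →
      ∫ ω, (A.mulVec x + B.mulVec (w ω)) ⬝ᵥ Q.mulVec (A.mulVec x + B.mulVec (w ω)) ∂μ ≤
        x ⬝ᵥ Q.mulVec x :=
  quadratic_drift_outside_compact_general μ A B Q ε hε hdecr w hL2 hmean Sw hcov
end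

section
/- Let Q ∈ ℝ^{n×n} be symmetric positive definite, A ∈ ℝ^{n×n}, and write ‖z‖_Q := √(zᵀQz). Suppose r₀ := sup_{x≠0} ‖Ax‖_Q² / ‖x‖_Q² < 1 and let b > 0. Then there exists η > 0 such that for all x, v ∈ ℝⁿ with ‖x‖_Q² ≥ 2b and ‖v‖_Q ≤ η, one has ‖Ax+v‖_Q² − ‖x‖_Q² ≤ −(1−r₀)b. -/
/-!
Put the energy norm `‖z‖_Q` on `ℝⁿ`; then `r₀` is the supremum of `‖Ax‖²/‖x‖²`, so
`‖Ax‖ ≤ √r₀ ‖x‖ ≤ ‖x‖`. For `‖v‖ ≤ η` the triangle inequality gives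
`‖Ax + v‖² ≤ r₀‖x‖² + 3‖x‖η`, and `‖x‖² ≥ 2b` makes `‖x‖² - b ≥ ‖x‖²/2` and `‖x‖ ≥ √b`,
so that `η = (1 - r₀)√b/8` absorbs the cross term into `(1 - r₀)(‖x‖² - b)`.
-/

open Matrix

theorem sq_add_sub_sq_le_of_sq_le_mul_sq {a t w r b : ℝ} (ha : 0 ≤ a) (ht : 0 ≤ t)
    (hw : 0 ≤ w) (hr1 : r < 1) (hb : 0 < b) (hat : a ^ 2 ≤ r * t ^ 2)
    (htb : 2 * b ≤ t ^ 2) (hwb : w ≤ (1 - r) * √b / 8) :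
    (a + w) ^ 2 - t ^ 2 ≤ -((1 - r) * b) := by
  have hsb : √b ^ 2 = b := Real.sq_sqrt hb.le
  have hbt : √b ≤ t := (Real.sqrt_le_left ht).mpr (by linarith)
  have hat' : a ≤ t := by nlinarith
  have hwt : w ≤ (1 - r) * t / 8 := hwb.trans (by gcongr)
  nlinarith [mul_le_mul hat' hwt hw ht, mul_le_mul_of_nonneg_left hwt hw]

namespace ContinuousLinearMap

variable {𝕜 E F : Type*} [NontriviallyNormedField 𝕜] [NormedAddCommGroup E] [NormedSpace 𝕜 E]
  [NormedAddCommGroup F] [NormedSpace 𝕜 F]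

theorem bddAbove_norm_sq_div_norm_sq (f : E →L[𝕜] F) :
    BddAbove {r : ℝ | ∃ x : E, x ≠ 0 ∧ r = ‖f x‖ ^ 2 / ‖x‖ ^ 2} := by
  refine ⟨‖f‖ ^ 2, ?_⟩
  rintro _ ⟨x, hx, rfl⟩
  rw [div_le_iff₀ (by positivity), ← mul_pow]
  gcongr
  exact f.le_opNorm x

theorem norm_sq_le_sSup_mul (f : E →L[𝕜] F) (x : E) :
    ‖f x‖ ^ 2 ≤ sSup {r : ℝ | ∃ x : E, x ≠ 0 ∧ r = ‖f x‖ ^ 2 / ‖x‖ ^ 2} * ‖x‖ ^ 2 := by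
  rcases eq_or_ne x 0 with rfl | hx
  · simp
  · rw [← div_le_iff₀ (by positivity)]
    exact le_csSup f.bddAbove_norm_sq_div_norm_sq ⟨x, hx, rfl⟩

theorem exists_pos_forall_norm_sq_add_sub_le [NormedSpace ℝ E] [NormedSpace ℝ F]
    (f : E →L[ℝ] F) {b : ℝ} (hb : 0 < b)
    (hf : sSup {r : ℝ | ∃ x : E, x ≠ 0 ∧ r = ‖f x‖ ^ 2 / ‖x‖ ^ 2} < 1) :
    ∃ η : ℝ, 0 < η ∧ ∀ x v, 2 * b ≤ ‖x‖ ^ 2 → ‖v‖ ≤ η →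
      ‖f x + v‖ ^ 2 - ‖x‖ ^ 2 ≤
        -((1 - sSup {r : ℝ | ∃ x : E, x ≠ 0 ∧ r = ‖f x‖ ^ 2 / ‖x‖ ^ 2}) * b) := by
  set r₀ := sSup {r : ℝ | ∃ x : E, x ≠ 0 ∧ r = ‖f x‖ ^ 2 / ‖x‖ ^ 2}
  have hη : 0 < (1 - r₀) * √b / 8 := by
    have := sub_pos.mpr hf; have := Real.sqrt_pos.mpr hb; positivity
  refine ⟨_, hη, fun x v hx hv => ?_⟩
  calc ‖f x + v‖ ^ 2 - ‖x‖ ^ 2 ≤ (‖f x‖ + ‖v‖) ^ 2 - ‖x‖ ^ 2 := by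
        gcongr; exact norm_add_le _ _
    _ ≤ -((1 - r₀) * b) :=
        sq_add_sub_sq_le_of_sq_le_mul_sq (norm_nonneg _) (norm_nonneg _) (norm_nonneg _) hf
          hb (f.norm_sq_le_sSup_mul x) hx hv

end ContinuousLinearMap

theorem LinearMap.exists_pos_forall_inner_add_sub_le {E F : Type*}
    [NormedAddCommGroup E] [InnerProductSpace ℝ E] [FiniteDimensional ℝ E]
    [NormedAddCommGroup F] [InnerProductSpace ℝ F] (f : E →ₗ[ℝ] F) {b : ℝ} (hb : 0 < b)
    (hf : sSup {r : ℝ | ∃ x : E, x ≠ 0 ∧ r = inner ℝ (f x) (f x) / inner ℝ x x} < 1) :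
    ∃ η : ℝ, 0 < η ∧ ∀ x v, 2 * b ≤ inner ℝ x x → √(inner ℝ v v) ≤ η →
      inner ℝ (f x + v) (f x + v) - inner ℝ x x ≤
        -((1 - sSup {r : ℝ | ∃ x : E, x ≠ 0 ∧ r = inner ℝ (f x) (f x) / inner ℝ x x}) * b) := by
  simp only [real_inner_self_eq_norm_sq] at hf ⊢
  obtain ⟨η, hη, hdecr⟩ :=
    (LinearMap.toContinuousLinearMap f).exists_pos_forall_norm_sq_add_sub_le hb hf
  refine ⟨η, hη, fun x v hx hv => hdecr x v hx ?_⟩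
  rwa [Real.sqrt_sq (norm_nonneg v)] at hv

open scoped ComplexOrder in
theorem Matrix.inner_toInnerProductSpace {n 𝕜 : Type*} [Fintype n] [RCLike 𝕜]
    {M : Matrix n n 𝕜} (hM : M.PosSemidef) (x y : n → 𝕜) :
    @inner 𝕜 _ (M.toInnerProductSpace hM).toInner x y = (M *ᵥ y) ⬝ᵥ star x :=
  rfl

/-- One-step decrease of the quadratic variant `U(x) = xᵀQx - b` for a stable linear map:
if `r₀ = sup_{x ≠ 0} ‖Ax‖_Q²/‖x‖_Q² < 1` and `b > 0`, then there is `η > 0` such that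
`‖Ax+v‖_Q² - ‖x‖_Q² ≤ -(1-r₀)b` whenever `‖x‖_Q² ≥ 2b` and `‖v‖_Q ≤ η`. -/
theorem quadratic_variant_decrease {n : ℕ}
    (Q A : Matrix (Fin n) (Fin n) ℝ) (hQ : Q.PosDef)
    (b : ℝ) (hb : 0 < b) (r0 : ℝ)
    (hr0 : r0 = sSup {r : ℝ | ∃ x : Fin n → ℝ, x ≠ 0 ∧
      r = (A.mulVec x ⬝ᵥ Q.mulVec (A.mulVec x)) / (x ⬝ᵥ Q.mulVec x)})
    (hr0lt : r0 < 1) :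
    ∃ η : ℝ, 0 < η ∧ ∀ x v : Fin n → ℝ,
      2 * b ≤ x ⬝ᵥ Q.mulVec x →
      Real.sqrt (v ⬝ᵥ Q.mulVec v) ≤ η →
      (A.mulVec x + v) ⬝ᵥ Q.mulVec (A.mulVec x + v) - x ⬝ᵥ Q.mulVec x ≤
        -((1 - r0) * b) := by
  subst hr0
  -- Passed explicitly: instance search would find the sup norm of `Fin n → ℝ` first.
  let instNorm := Q.toNormedAddCommGroup hQ
  let instInner := Q.toInnerProductSpace hQ.posSemidef
  have hQinner (x y : Fin n → ℝ) : @inner ℝ _ instInner.toInner x y = x ⬝ᵥ Q *ᵥ y := by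
    rw [Matrix.inner_toInnerProductSpace, star_trivial, dotProduct_comm]
  have hdecr := @LinearMap.exists_pos_forall_inner_add_sub_le _ _ instNorm instInner _ instNorm
    instInner A.mulVecLin b hb
  simp only [hQinner, mulVecLin_apply] at hdecr
  exact hdecr hr0lt
end

section
/- Let A ∈ ℝ^{n×n} and let λ ∈ ℂ with |λ| = 1 be such that there exists z ∈ ℂⁿ with (A − λI)² z = 0 and (A − λI) z ≠ 0 (viewing A as a complex matrix). Then there exist a nonzero real vector v₀ ∈ ℝⁿ, a constant c₀ > 0, and k₀ ∈ ℕ such that ‖A^k v₀‖ ≥ c₀·k for all k ≥ k₀. -/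
/-!
Let `w = (A - λ) z`, an eigenvector of `A` for `λ`, so that
`Aᵏ z = λᵏ z + k λᵏ⁻¹ w`. For `c ∈ ℂ`, taking real parts gives
`‖Aᵏ Re (c z)‖ ≥ k ‖Re (λᵏ⁻¹ c w)‖ - ‖Re (λᵏ c z)‖`, and the subtracted term is bounded
since `|λ| = 1`. It remains to bound `‖Re (λʲ c w)‖` away from zero. If `λ` is real then
`λʲ = ±1`, and it suffices to choose `c` with `Re (c w) ≠ 0`. Otherwise `d ↦ Re (d w)` is
injective on `ℂ`, because a real matrix has no purely imaginary eigenvector for a non-real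
eigenvalue; being real-linear on a finite-dimensional space it is then bounded below on the
unit circle.
-/

open Matrix

theorem Module.End.pow_apply_of_apply_eq_smul_add {R M : Type*} [CommSemiring R]
    [AddCommMonoid M] [Module R M] {f : Module.End R M} {μ : R} {z w : M}
    (hz : f z = μ • z + w) (hw : f w = μ • w) (k : ℕ) :
    (f ^ k) z = μ ^ k • z + k • μ ^ (k - 1) • w := by
  induction k with
  | zero => simp
  | succ k ih =>
    rw [pow_succ', Module.End.mul_apply, ih, map_add, map_smul, map_nsmul, map_smul, hz, hw]
    rcases k with _ | k
    · simp
    · simp only [Nat.add_sub_cancel, smul_add, smul_smul, succ_nsmul]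
      module

variable {ι : Type*}

noncomputable def reSmulVec (v : ι → ℂ) : ℂ →ₗ[ℝ] EuclideanSpace ℝ ι where
  toFun d := WithLp.toLp 2 fun i => (d * v i).re
  map_add' _ _ := by ext; simp [add_mul]
  map_smul' _ _ := by ext; simp [mul_assoc]

@[simp]
lemma reSmulVec_apply (v : ι → ℂ) (d : ℂ) (i : ι) : reSmulVec v d i = (d * v i).re := rfl

lemma exists_reSmulVec_ne_zero {v : ι → ℂ} (hv : v ≠ 0) : ∃ c, reSmulVec v c ≠ 0 := by
  by_contra! h
  refine hv (funext fun i => Complex.ext ?_ ?_)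
  · simpa using congr($(h 1) i)
  · simpa using congr($(h (-Complex.I)) i)

lemma Matrix.re_mulVec_map_ofReal [Fintype ι] (A : Matrix ι ι ℝ) (z : ι → ℂ) :
    (fun i => ((A.map Complex.ofReal *ᵥ z) i).re) = A *ᵥ fun i => (z i).re := by
  funext i
  simp [mulVec, dotProduct, Complex.re_sum]

lemma norm_toLp_eq_sqrt_dotProduct [Fintype ι] (v : ι → ℝ) : ‖WithLp.toLp 2 v‖ = √(v ⬝ᵥ v) := by
  rw [norm_eq_sqrt_real_inner, EuclideanSpace.inner_toLp_toLp, star_trivial]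

lemma eq_zero_of_mulVec_eq_smul_of_re_eq_zero [Fintype ι] {A : Matrix ι ι ℝ} {μ : ℂ}
    {w : ι → ℂ} (hw : A.map Complex.ofReal *ᵥ w = μ • w) (hμ : μ.im ≠ 0)
    (hre : ∀ i, (w i).re = 0) : w = 0 := by
  have hre_eq := congr((fun i => ($hw i).re))
  rw [re_mulVec_map_ofReal, show (fun i => (w i).re) = 0 from funext hre, mulVec_zero] at hre_eq
  funext i
  have him : μ.im * (w i).im = 0 := by
    simpa [Complex.mul_re, hre] using (congr_fun hre_eq i).symm
  exact Complex.ext (hre i) ((mul_eq_zero.mp him).resolve_left hμ)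

lemma ker_reSmulVec_eq_bot [Fintype ι] {A : Matrix ι ι ℝ} {μ : ℂ} {w : ι → ℂ}
    (hw : A.map Complex.ofReal *ᵥ w = μ • w) (hμ : μ.im ≠ 0) (hw0 : w ≠ 0) :
    LinearMap.ker (reSmulVec w) = ⊥ := by
  refine LinearMap.ker_eq_bot'.mpr fun d hd => by_contra fun hd0 => hw0 ?_
  have hdw : A.map Complex.ofReal *ᵥ (d • w) = μ • d • w := by
    rw [mulVec_smul, hw, smul_comm]
  have := eq_zero_of_mulVec_eq_smul_of_re_eq_zero hdw hμ fun i => congr($hd i)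
  exact (smul_eq_zero.mp this).resolve_left hd0

lemma exists_pos_le_norm_reSmulVec_pow_mul [Fintype ι] {A : Matrix ι ι ℝ} {μ : ℂ}
    (hμ : ‖μ‖ = 1) {w : ι → ℂ} (hw : A.map Complex.ofReal *ᵥ w = μ • w) (hw0 : w ≠ 0) :
    ∃ c : ℂ, ∃ m > 0, ∀ j : ℕ, m ≤ ‖reSmulVec w (μ ^ j * c)‖ := by
  by_cases him : μ.im = 0
  · obtain ⟨c, hc⟩ := exists_reSmulVec_ne_zero hw0
    refine ⟨c, ‖reSmulVec w c‖, norm_pos_iff.mpr hc, fun j => le_of_eq ?_⟩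
    obtain ⟨r, rfl⟩ : ∃ r : ℝ, μ = r := ⟨μ.re, Complex.ext rfl (by simpa using him)⟩
    rw [Complex.norm_real, Real.norm_eq_abs] at hμ
    rw [← Complex.ofReal_pow, ← Complex.real_smul, map_smul, norm_smul, Real.norm_eq_abs,
      abs_pow, hμ, one_pow, one_mul]
  · obtain ⟨K, hK, hanti⟩ :=
      (reSmulVec w).exists_antilipschitzWith (ker_reSmulVec_eq_bot hw him hw0)
    refine ⟨1, K⁻¹, inv_pos.mpr (mod_cast hK), fun j => ?_⟩
    have := ZeroHomClass.bound_of_antilipschitz (reSmulVec w) hanti (μ ^ j * 1)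
    rw [mul_one, norm_pow, hμ, one_pow] at this
    rw [mul_one]
    exact (inv_le_iff_one_le_mul₀' (mod_cast hK)).mpr this

lemma toLp_pow_mulVec_re_eq [Fintype ι] [DecidableEq ι] {A : Matrix ι ι ℝ} {μ : ℂ}
    {z w : ι → ℂ}
    (hpow : ∀ k : ℕ, (A.map Complex.ofReal) ^ k *ᵥ z = μ ^ k • z + k • μ ^ (k - 1) • w)
    (c : ℂ) (k : ℕ) :
    WithLp.toLp 2 (A ^ k *ᵥ fun i => (c * z i).re) =
      reSmulVec z (μ ^ k * c) + k • reSmulVec w (μ ^ (k - 1) * c) := by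
  have h : (A ^ k *ᵥ fun i => (c * z i).re) =
      fun i => ((c • ((A.map Complex.ofReal) ^ k *ᵥ z)) i).re := by
    have hmap : (A ^ k).map Complex.ofReal = (A.map Complex.ofReal) ^ k :=
      A.map_pow Complex.ofRealHom k
    rw [← mulVec_smul, ← hmap, re_mulVec_map_ofReal]
    rfl
  rw [h, hpow k]
  ext i
  simp
  ring

lemma exists_forall_sub_le_norm_pow_mulVec [Fintype ι] [DecidableEq ι] {A : Matrix ι ι ℝ}
    {μ : ℂ} (hμ : ‖μ‖ = 1) {z w : ι → ℂ} (hw : A.map Complex.ofReal *ᵥ w = μ • w) (hw0 : w ≠ 0)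
    (hpow : ∀ k : ℕ, (A.map Complex.ofReal) ^ k *ᵥ z = μ ^ k • z + k • μ ^ (k - 1) • w) :
    ∃ v : ι → ℝ, ∃ m > 0, ∃ C : ℝ, ∀ k : ℕ, k * m - C ≤ ‖WithLp.toLp 2 (A ^ k *ᵥ v)‖ := by
  obtain ⟨c, m, hm, hmw⟩ := exists_pos_le_norm_reSmulVec_pow_mul hμ hw hw0
  set L := (reSmulVec z).toContinuousLinearMap
  refine ⟨fun i => (c * z i).re, m, hm, ‖L‖ * ‖c‖, fun k => ?_⟩
  rw [toLp_pow_mulVec_re_eq hpow c k]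
  have hz_le : ‖reSmulVec z (μ ^ k * c)‖ ≤ ‖L‖ * ‖c‖ := by
    have h := L.le_opNorm (μ ^ k * c)
    rwa [norm_mul, norm_pow, hμ, one_pow, one_mul] at h
  have hw_ge : k * m ≤ ‖k • reSmulVec w (μ ^ (k - 1) * c)‖ := by
    rw [RCLike.norm_nsmul ℝ, nsmul_eq_mul]
    exact mul_le_mul_of_nonneg_left (hmw _) k.cast_nonneg
  linarith [norm_le_add_norm_add' (reSmulVec z (μ ^ k * c)) (k • reSmulVec w (μ ^ (k - 1) * c))]

lemma exists_pos_mul_le_of_forall_sub_le {f : ℕ → ℝ} {m C : ℝ} (hm : 0 < m)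
    (h : ∀ k : ℕ, k * m - C ≤ f k) : ∃ c₀ > 0, ∃ k₀ : ℕ, ∀ k ≥ k₀, c₀ * k ≤ f k := by
  refine ⟨m / 2, half_pos hm, ⌈2 * C / m⌉₊, fun k hk => ?_⟩
  have hCk : 2 * C ≤ k * m := (div_le_iff₀ hm).mp ((Nat.le_ceil _).trans (mod_cast hk))
  linarith [h k]

/-- If the complexification of the real matrix `A` has a Jordan block of size at least two
for a unit-modulus eigenvalue `λ` (witnessed by a generalized eigenvector `z` of rank two),
then some nonzero real direction grows at least linearly: `‖A^k v₀‖ ≥ c₀·k` for all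
large `k` (Euclidean norm). -/
theorem real_direction_linear_growth {n : ℕ} (A : Matrix (Fin n) (Fin n) ℝ) (lam : ℂ)
    (hmod : ‖lam‖ = 1)
    (hz : ∃ z : Fin n → ℂ,
      ((A.map (Complex.ofReal) - lam • (1 : Matrix (Fin n) (Fin n) ℂ)) ^ 2).mulVec z = 0 ∧
      (A.map (Complex.ofReal) - lam • (1 : Matrix (Fin n) (Fin n) ℂ)).mulVec z ≠ 0) :
    ∃ (v₀ : Fin n → ℝ) (c₀ : ℝ) (k₀ : ℕ), v₀ ≠ 0 ∧ 0 < c₀ ∧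
      ∀ k : ℕ, k₀ ≤ k →
        c₀ * k ≤ Real.sqrt ((A ^ k).mulVec v₀ ⬝ᵥ (A ^ k).mulVec v₀) := by
  obtain ⟨z, hz2, hw0⟩ := hz
  set B := A.map Complex.ofReal
  set w := (B - lam • 1) *ᵥ z
  have hBz : B *ᵥ z = lam • z + w := by simp [w, sub_mulVec, smul_mulVec]
  have hBw : B *ᵥ w = lam • w := by
    have h : (B - lam • 1) *ᵥ w = 0 := by rwa [mulVec_mulVec, ← sq]
    rwa [sub_mulVec, smul_mulVec, one_mulVec, sub_eq_zero] at h
  have hpow (k : ℕ) : B ^ k *ᵥ z = lam ^ k • z + k • lam ^ (k - 1) • w := by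
    have h := Module.End.pow_apply_of_apply_eq_smul_add (f := toLin' B) hBz hBw k
    rwa [← Matrix.toLin'_pow, toLin'_apply] at h
  obtain ⟨v₀, m, hm, C, hgrowth⟩ := exists_forall_sub_le_norm_pow_mulVec hmod hBw hw0 hpow
  simp_rw [norm_toLp_eq_sqrt_dotProduct] at hgrowth
  obtain ⟨c₀, hc₀, k₀, hk₀⟩ := exists_pos_mul_le_of_forall_sub_le hm hgrowth
  refine ⟨v₀, c₀, k₀, fun hv₀ => ?_, hc₀, hk₀⟩
  have h := hk₀ (k₀ + 1) le_self_add
  rw [hv₀, mulVec_zero, dotProduct_zero, Real.sqrt_zero] at h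
  exact (mul_pos hc₀ k₀.cast_add_one_pos).not_ge (by exact_mod_cast h)
end

section
/- Let A ∈ ℝ^{n×n}. If the complexification of A (A viewed as a complex n×n matrix) is diagonalizable over ℂ and every eigenvalue λ ∈ ℂ of A has modulus |λ| = 1, then there exists a symmetric positive definite matrix Q ∈ ℝ^{n×n} such that AᵀQA = Q. -/
/-!
Over `ℂ`, let `b` be an eigenbasis of `A` and `M` the matrix taking a vector to its
`b`-coordinates, so that `M A = D M` with `D` diagonal and unitary (the eigenvalues have modulus
one). Then `H = Mᴴ M` is positive definite and `Aᴴ H A = (D M)ᴴ (D M) = H`. Since `A` is real,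
the real part `Q = Re H` is still invariant, and `xᵀ Q x = Re (xᴴ H x) > 0` for real `x ≠ 0`.
-/

open Matrix Module End
open scoped ComplexOrder

theorem Module.End.exists_basis_hasEigenvector {K V : Type*} [Field K] [AddCommGroup V] [Module K V]
    [FiniteDimensional K V] {f : End K V} (h : ⨆ μ, f.eigenspace μ = ⊤) :
    ∃ (b : Basis (Fin (finrank K V)) K V) (μ : Fin (finrank K V) → K),
      ∀ i, f.HasEigenvector (μ i) (b i) := by
  classical
  have hInt := DirectSum.isInternal_submodule_of_iSupIndep_of_iSup_eq_top
    f.eigenspaces_iSupIndep h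
  let b := hInt.collectedBasis fun μ ↦ Free.chooseBasis K (f.eigenspace μ)
  let e := b.indexEquiv (finBasis K V)
  refine ⟨b.reindex e, fun i ↦ (e.symm i).1, fun i ↦ ?_⟩
  rw [Basis.reindex_apply]
  exact ⟨hInt.collectedBasis_mem _ _, b.ne_zero _⟩

theorem Matrix.toMatrix'_equivFun_mul_eq_diagonal_mul {R n ι : Type*} [CommRing R] [Fintype n]
    [DecidableEq n] [Fintype ι] [DecidableEq ι] {B : Matrix n n R}
    (b : Basis ι R (n → R)) {μ : ι → R} (hb : ∀ i, B *ᵥ b i = μ i • b i) :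
    LinearMap.toMatrix' (b.equivFun : (n → R) →ₗ[R] ι → R) * B =
      diagonal μ * LinearMap.toMatrix' (b.equivFun : (n → R) →ₗ[R] ι → R) := by
  refine toLin'.injective (b.ext fun i ↦ ?_)
  simp [toLin'_mul, hb, Finsupp.single_eq_pi_single, ← Pi.single_smul]

theorem Matrix.conjTranspose_mul_mul_eq_of_mul_eq_diagonal_mul {R n ι : Type*} [CommRing R]
    [StarRing R] [Fintype n] [Fintype ι] [DecidableEq ι]
    {B : Matrix n n R} {M : Matrix ι n R} {d : ι → R} (hd : ∀ i, star (d i) * d i = 1)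
    (h : M * B = diagonal d * M) : Bᴴ * (Mᴴ * M) * B = Mᴴ * M := by
  have hdd : (diagonal d)ᴴ * diagonal d = 1 := by
    rw [diagonal_conjTranspose, diagonal_mul_diagonal, ← diagonal_one]
    exact congrArg diagonal (funext hd)
  calc Bᴴ * (Mᴴ * M) * B = (M * B)ᴴ * (M * B) := by
        simp only [conjTranspose_mul, Matrix.mul_assoc]
    _ = Mᴴ * ((diagonal d)ᴴ * diagonal d) * M := by
        simp only [h, conjTranspose_mul, Matrix.mul_assoc]
    _ = Mᴴ * M := by rw [hdd, Matrix.mul_one]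

section RCLike

variable {𝕜 : Type*} [RCLike 𝕜]

theorem Matrix.exists_posDef_conjTranspose_mul_mul_eq_self {n ι : Type*} [Fintype n]
    [DecidableEq n] [Fintype ι] [DecidableEq ι] {B : Matrix n n 𝕜}
    (b : Basis ι 𝕜 (n → 𝕜)) {μ : ι → 𝕜} (hb : ∀ i, B *ᵥ b i = μ i • b i)
    (hμ : ∀ i, ‖μ i‖ = 1) :
    ∃ H : Matrix n n 𝕜, H.PosDef ∧ Bᴴ * H * B = H := by
  set M := LinearMap.toMatrix' (b.equivFun : (n → 𝕜) →ₗ[𝕜] ι → 𝕜)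
  have hM : Function.Injective M.mulVec := by
    simpa [M, funext (LinearMap.toMatrix'_mulVec _)] using b.equivFun.injective
  refine ⟨Mᴴ * M, .conjTranspose_mul_self M hM,
    conjTranspose_mul_mul_eq_of_mul_eq_diagonal_mul (fun i ↦ ?_)
      (toMatrix'_equivFun_mul_eq_diagonal_mul b hb)⟩
  rw [RCLike.star_def, RCLike.conj_mul, hμ]
  simp

theorem Matrix.map_re_map_ofReal_mul {l m n : Type*} [Fintype m]
    (C : Matrix l m ℝ) (H : Matrix m n 𝕜) :
    (C.map ((↑) : ℝ → 𝕜) * H).map RCLike.re = C * H.map RCLike.re := by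
  ext i j
  simp [mul_apply]

theorem Matrix.map_re_mul_map_ofReal {l m n : Type*} [Fintype m]
    (H : Matrix l m 𝕜) (C : Matrix m n ℝ) :
    (H * C.map ((↑) : ℝ → 𝕜)).map RCLike.re = H.map RCLike.re * C := by
  ext i j
  simp [mul_apply]

theorem Matrix.dotProduct_map_re_mulVec {n : Type*} [Fintype n]
    (H : Matrix n n 𝕜) (x : n → ℝ) :
    x ⬝ᵥ H.map RCLike.re *ᵥ x =
      RCLike.re (star (x · : n → 𝕜) ⬝ᵥ H *ᵥ (x · : n → 𝕜)) := by
  simp [dotProduct, mulVec, Finset.mul_sum]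

theorem Matrix.PosDef.map_re {n : Type*} [Fintype n] {H : Matrix n n 𝕜}
    (hH : H.PosDef) : (H.map RCLike.re).PosDef := by
  refine .of_dotProduct_mulVec_pos (hH.isHermitian.map _ fun z ↦ by simp) fun x hx ↦ ?_
  rw [star_trivial, dotProduct_map_re_mulVec]
  refine (RCLike.pos_iff.mp (hH.dotProduct_mulVec_pos fun h ↦ hx ?_)).1
  ext i
  simpa using congrFun h i

theorem Matrix.transpose_mul_map_re_mul_eq_self {n : Type*} [Fintype n]
    {A : Matrix n n ℝ} {H : Matrix n n 𝕜}
    (h : (A.map ((↑) : ℝ → 𝕜))ᴴ * H * A.map ((↑) : ℝ → 𝕜) = H) :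
    Aᵀ * H.map RCLike.re * A = H.map RCLike.re := by
  have hAconj : (A.map ((↑) : ℝ → 𝕜))ᴴ = Aᵀ.map ((↑) : ℝ → 𝕜) := by
    ext i j
    simp
  rw [← map_re_map_ofReal_mul, ← map_re_mul_map_ofReal, ← hAconj, h]

end RCLike

/-- If the complexification of a real matrix `A` is diagonalizable over `ℂ` (the
eigenspaces span `ℂⁿ`) and all its eigenvalues have modulus one, then there is a
symmetric positive definite `Q` with `AᵀQA = Q`. -/
theorem invariant_quadratic_form_of_unit_spectrum {n : ℕ} (A : Matrix (Fin n) (Fin n) ℝ)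
    (hdiag : ⨆ lam : ℂ,
      Module.End.eigenspace (Matrix.toLin' (A.map (Complex.ofReal))) lam = ⊤)
    (hmod : ∀ lam : ℂ,
      Module.End.HasEigenvalue (Matrix.toLin' (A.map (Complex.ofReal))) lam → ‖lam‖ = 1) :
    ∃ Q : Matrix (Fin n) (Fin n) ℝ, Q.PosDef ∧ Aᵀ * Q * A = Q := by
  obtain ⟨b, μ, hb⟩ := exists_basis_hasEigenvector hdiag
  obtain ⟨H, hH, hAH⟩ := exists_posDef_conjTranspose_mul_mul_eq_self b
    (fun i ↦ by simpa only [toLin'_apply] using (hb i).apply_eq_smul)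
    (fun i ↦ hmod _ (hasEigenvalue_of_hasEigenvector (hb i)))
  exact ⟨H.map RCLike.re, hH.map_re, transpose_mul_map_re_mul_eq_self hAH⟩
end

section
/- Let w be a real random variable with E[w] = 0, E[w²] > 0, and E[|w|³] < ∞; let b ≠ 0 be real and a ∈ {−1, 1}. Define V : ℝ → ℝ by V(x) := √(max(ln|x|, 0)) (with V(0) := 0). Then there exists R ≥ 1 such that for all x with |x| ≥ R, E[V(a x + b w)] ≤ V(x). -/
/-!
Write `y = |x|` and `v = ±b w`, so that `|a x + b w| = |y + v|` with `𝔼 v = 0`. For `y ≥ 2` the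
Taylor expansion of `log (1 + v / y)` gives the pointwise majorant
`max (log |y + v|) 0 ≤ log y + v / y - v² / (2 y²) + 9 |v|³ / y³`, whose expectation is at most
`log y` as soon as `18 𝔼|v|³ ≤ y 𝔼 v²`: the negative second-order term beats the third-order
remainder. Concavity of the square root, in the form `√z ≤ (z + L) / (2 √L)`, then turns
`𝔼 max (log |y + v|) 0 ≤ log y` into `𝔼 √(max (log |y + v|) 0) ≤ √(log y)`.
-/

open MeasureTheory Real

lemma log_one_add_le_of_abs_le_half {s : ℝ} (hs : |s| ≤ 1 / 2) :
    log (1 + s) ≤ s - s ^ 2 / 2 + 2 * |s| ^ 3 := by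
  have hsum : ∑ i ∈ Finset.range 2, (-s) ^ (i + 1) / (i + 1) = -s + s ^ 2 / 2 := by
    norm_num [Finset.sum_range_succ]
  have htaylor := abs_log_sub_add_sum_range_le (x := -s) (by rw [abs_neg]; linarith) 2
  rw [hsum, abs_neg, sub_neg_eq_add] at htaylor
  have hrem : |s| ^ 3 / (1 - |s|) ≤ 2 * |s| ^ 3 := by
    rw [div_le_iff₀ (by linarith)]
    nlinarith [pow_nonneg (abs_nonneg s) 3]
  linarith [(abs_le.mp htaylor).2]

lemma max_log_abs_add_le_log_add {y : ℝ} (v : ℝ) (hy : 1 ≤ y) :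
    max (log |y + v|) 0 ≤ log y + |v| / y := by
  have hy0 : 0 < y := by linarith
  have hlog_le : max (log |y + v|) 0 ≤ log (y + |v|) := by
    refine max_le ?_ (log_nonneg (by linarith [abs_nonneg v]))
    rcases (abs_nonneg (y + v)).eq_or_lt with h0 | hpos
    · rw [← h0, log_zero]
      exact log_nonneg (by linarith [abs_nonneg v])
    · exact log_le_log hpos ((abs_add_le y v).trans_eq (by rw [abs_of_pos hy0]))
  have hsplit : log (y + |v|) = log y + log (1 + |v| / y) := by
    rw [← log_mul hy0.ne' (by positivity), mul_add, mul_one, mul_div_cancel₀ _ hy0.ne']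
  linarith [log_le_sub_one_of_pos (show 0 < 1 + |v| / y by positivity)]

/-- The constant `9` is the least one for which the crude bound `log y + |v| / y` stays below
the majorant in the regime `|v| ≥ y / 2`, where the Taylor expansion is not available:
with `u = |v| / y ≥ 1 / 2` this needs `2 u + u² / 2 ≤ 9 u³`, an equality at `u = 1 / 2`. -/
noncomputable def logMajorant (y v : ℝ) : ℝ :=
  log y + v / y - (v / y) ^ 2 / 2 + 9 * |v / y| ^ 3

lemma max_log_abs_add_le_logMajorant {y : ℝ} (v : ℝ) (hy : 2 ≤ y) :
    max (log |y + v|) 0 ≤ logMajorant y v := by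
  have hy0 : 0 < y := by linarith
  set u := v / y with hu
  have hv : v = y * u := by rw [hu, mul_div_cancel₀ _ hy0.ne']
  rcases le_or_gt |u| (1 / 2) with hsmall | hlarge
  · have hyv : 1 ≤ y + v := by
      have := mul_le_mul_of_nonneg_left (neg_le_of_abs_le hsmall) hy0.le
      nlinarith
    have hfactor : y + v = y * (1 + u) := by rw [hv]; ring
    rw [abs_of_pos (by linarith), max_eq_left (log_nonneg hyv), hfactor,
      log_mul hy0.ne' (by linarith [neg_abs_le u]), logMajorant, ← hu]
    linarith [log_one_add_le_of_abs_le_half hsmall, pow_nonneg (abs_nonneg u) 3]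
  · have hcrude := max_log_abs_add_le_log_add v (by linarith : (1 : ℝ) ≤ y)
    rw [show |v| / y = |u| by rw [hu, abs_div, abs_of_pos hy0]] at hcrude
    have hcubic : 2 * |u| + |u| ^ 2 / 2 ≤ 9 * |u| ^ 3 := by
      nlinarith [mul_nonneg (mul_nonneg (abs_nonneg u) (by linarith : (0 : ℝ) ≤ |u| - 1 / 2))
        (by linarith [abs_nonneg u] : (0 : ℝ) ≤ 9 * |u| + 4)]
    rw [logMajorant, ← hu, ← sq_abs u]
    linarith [neg_abs_le u]

section Moments

variable {Ω : Type*} [MeasurableSpace Ω] {μ : Measure Ω} {v : Ω → ℝ}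

lemma memLp_of_integrable_abs_pow {n : ℕ} (hn : n ≠ 0) (hmeas : AEStronglyMeasurable v μ)
    (hint : Integrable (fun ω => |v ω| ^ n) μ) : MemLp v n μ := by
  rw [← integrable_norm_rpow_iff hmeas (by exact_mod_cast hn) (by simp)]
  simpa only [ENNReal.toReal_natCast, rpow_natCast, Real.norm_eq_abs] using hint

variable [IsProbabilityMeasure μ] (h1 : Integrable v μ) (h2 : Integrable (fun ω => v ω ^ 2) μ)
  (h3 : Integrable (fun ω => |v ω| ^ 3) μ)
include h1 h2 h3

lemma integrable_logMajorant (y : ℝ) : Integrable (fun ω => logMajorant y (v ω)) μ := by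
  simp only [logMajorant, div_pow, abs_div]
  fun_prop

lemma integral_logMajorant {y : ℝ} (hy : 0 < y) (hmean : ∫ ω, v ω ∂μ = 0) :
    ∫ ω, logMajorant y (v ω) ∂μ =
      log y - (∫ ω, v ω ^ 2 ∂μ) / (2 * y ^ 2) + 9 * (∫ ω, |v ω| ^ 3 ∂μ) / y ^ 3 := by
  simp only [logMajorant, div_pow, abs_div, abs_of_pos hy]
  rw [integral_add, integral_sub, integral_add, integral_const, integral_const_mul,
    integral_div, integral_div, integral_div, integral_div, hmean]
  · simp only [probReal_univ, smul_eq_mul, one_mul]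
    ring
  all_goals fun_prop

end Moments

lemma sqrt_le_add_div_two_sqrt {z L : ℝ} (hz : 0 ≤ z) (hL : 0 < L) :
    √z ≤ (z + L) / (2 * √L) := by
  rw [le_div_iff₀ (by positivity)]
  have := two_mul_le_add_sq √z √L
  rw [sq_sqrt hz, sq_sqrt hL.le] at this
  linarith

lemma integral_sqrt_le_sqrt_of_le {Ω : Type*} [MeasurableSpace Ω] {μ : Measure Ω}
    [IsProbabilityMeasure μ] {f g : Ω → ℝ} {L : ℝ} (hf : 0 ≤ᵐ[μ] f) (hfg : f ≤ᵐ[μ] g)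
    (hg : Integrable g μ) (hL : 0 < L) (hgL : ∫ ω, g ω ∂μ ≤ L) :
    ∫ ω, √(f ω) ∂μ ≤ √L := by
  have hsL : 0 < √L := sqrt_pos.mpr hL
  calc ∫ ω, √(f ω) ∂μ ≤ ∫ ω, (g ω + L) / (2 * √L) ∂μ := by
        refine integral_mono_of_nonneg (.of_forall fun ω => sqrt_nonneg _)
          ((hg.add (integrable_const L)).div_const _) ?_
        filter_upwards [hf, hfg] with ω hf hfg
        exact (sqrt_le_add_div_two_sqrt hf hL).trans (by gcongr)
    _ = ((∫ ω, g ω ∂μ) + L) / (2 * √L) := by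
        rw [integral_div, integral_add hg (integrable_const L), integral_const]
        simp only [probReal_univ, one_smul]
    _ ≤ (L + L) / (2 * √L) := by gcongr
    _ = √L := by field_simp; rw [sq_sqrt hL.le]; ring

theorem integral_sqrt_max_log_abs_add_le {Ω : Type*} [MeasurableSpace Ω] {μ : Measure Ω}
    [IsProbabilityMeasure μ] {v : Ω → ℝ} {y : ℝ} (hv : MemLp v 3 μ) (hmean : ∫ ω, v ω ∂μ = 0)
    (hy : 2 ≤ y) (hdom : 18 * ∫ ω, |v ω| ^ 3 ∂μ ≤ y * ∫ ω, v ω ^ 2 ∂μ) :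
    ∫ ω, √(max (log |y + v ω|) 0) ∂μ ≤ √(max (log y) 0) := by
  have hy0 : 0 < y := by linarith
  have hlog : 0 < log y := log_pos (by linarith)
  have h1 : Integrable v μ := hv.integrable (by norm_num)
  have h2 : Integrable (fun ω => v ω ^ 2) μ := (hv.mono_exponent (by norm_num)).integrable_sq
  have h3 : Integrable (fun ω => |v ω| ^ 3) μ := by
    simpa only [Real.norm_eq_abs] using hv.integrable_norm_pow (by norm_num)
  have hmajorant : ∫ ω, logMajorant y (v ω) ∂μ ≤ log y := by
    rw [integral_logMajorant h1 h2 h3 hy0 hmean]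
    have : 9 * (∫ ω, |v ω| ^ 3 ∂μ) / y ^ 3 ≤ (∫ ω, v ω ^ 2 ∂μ) / (2 * y ^ 2) := by
      rw [div_le_div_iff₀ (by positivity) (by positivity)]
      nlinarith [mul_le_mul_of_nonneg_left hdom (by positivity : (0 : ℝ) ≤ y ^ 2)]
    linarith
  rw [max_eq_left hlog.le]
  exact integral_sqrt_le_sqrt_of_le (.of_forall fun _ => le_max_right _ _)
    (.of_forall fun ω => max_log_abs_add_le_logMajorant (v ω) hy)
    (integrable_logMajorant h1 h2 h3 y) hlog hmajorant

lemma exists_abs_mul_add_eq_abs_abs_add {a : ℝ} (ha : |a| = 1) (x b : ℝ) :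
    ∃ c, |c| = |b| ∧ ∀ v, |a * x + b * v| = |(|x| + c * v)| := by
  obtain ⟨ε, hε, hεx⟩ : ∃ ε, |ε| = 1 ∧ a * x = ε * |x| := by
    rcases le_or_gt 0 x with hx | hx
    · exact ⟨a, ha, by rw [abs_of_nonneg hx]⟩
    · exact ⟨-a, by rwa [abs_neg], by rw [abs_of_neg hx]; ring⟩
  have hεε : ε * ε = 1 := by rw [← abs_mul_abs_self, hε, one_mul]
  refine ⟨ε * b, by rw [abs_mul, hε, one_mul], fun v => ?_⟩
  rw [hεx, show ε * |x| + b * v = ε * (|x| + ε * b * v) by linear_combination (-(b * v)) * hεε,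
    abs_mul, hε, one_mul]

theorem sqrt_log_drift_one_dim_general {Ω : Type*} [MeasurableSpace Ω]
    (μ : Measure Ω) [IsProbabilityMeasure μ]
    (w : Ω → ℝ) (hmeas : Measurable w)
    (hmean : ∫ ω, w ω ∂μ = 0)
    (hvar : 0 < ∫ ω, (w ω) ^ 2 ∂μ)
    (h3 : Integrable (fun ω => |w ω| ^ 3) μ)
    (b : ℝ) (a : ℝ) (ha : a = -1 ∨ a = 1) :
    ∃ R : ℝ, 1 ≤ R ∧ ∀ x : ℝ, R ≤ |x| →
      ∫ ω, Real.sqrt (max (Real.log |a * x + b * w ω|) 0) ∂μ ≤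
        Real.sqrt (max (Real.log |x|) 0) := by
  have hw : MemLp w 3 μ := memLp_of_integrable_abs_pow three_ne_zero hmeas.aestronglyMeasurable h3
  refine ⟨max 2 (18 * |b| * (∫ ω, |w ω| ^ 3 ∂μ) / ∫ ω, w ω ^ 2 ∂μ),
    one_le_two.trans (le_max_left _ _), fun x hx => ?_⟩
  have hthreshold : 18 * |b| * (∫ ω, |w ω| ^ 3 ∂μ) ≤ |x| * ∫ ω, w ω ^ 2 ∂μ :=
    (div_le_iff₀' hvar).mp ((le_max_right _ _).trans hx) |>.trans_eq (mul_comm _ _)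
  have ha' : |a| = 1 := by rcases ha with rfl | rfl <;> simp
  obtain ⟨c, hc, hrw⟩ := exists_abs_mul_add_eq_abs_abs_add ha' x b
  simp_rw [hrw]
  refine integral_sqrt_max_log_abs_add_le (hw.const_mul c)
    (by rw [integral_const_mul, hmean, mul_zero]) ((le_max_left _ _).trans hx) ?_
  simp only [abs_mul, mul_pow, integral_const_mul]
  rw [← sq_abs c, hc]
  nlinarith [mul_le_mul_of_nonneg_left hthreshold (sq_nonneg |b|)]

/-- Drift criterion V1 with the non-quadratic drift `V(x) = √(max(ln|x|,0))` for the
one-dimensional critical linear stochastic system `x⁺ = a x + b w`, `|a| = 1`, `b ≠ 0`,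
where `w` has zero mean, positive variance and finite third absolute moment:
`E[V(ax + bw)] ≤ V(x)` for all sufficiently large `|x|`. -/
theorem sqrt_log_drift_one_dim {Ω : Type*} [MeasurableSpace Ω]
    (μ : Measure Ω) [IsProbabilityMeasure μ]
    (w : Ω → ℝ) (hmeas : Measurable w)
    (hmean : ∫ ω, w ω ∂μ = 0)
    (hvar : 0 < ∫ ω, (w ω) ^ 2 ∂μ)
    (h3 : Integrable (fun ω => |w ω| ^ 3) μ)
    (b : ℝ) (hb : b ≠ 0) (a : ℝ) (ha : a = -1 ∨ a = 1) :
    ∃ R : ℝ, 1 ≤ R ∧ ∀ x : ℝ, R ≤ |x| →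
      ∫ ω, Real.sqrt (max (Real.log |a * x + b * w ω|) 0) ∂μ ≤
        Real.sqrt (max (Real.log |x|) 0) :=
  sqrt_log_drift_one_dim_general μ w hmeas hmean hvar h3 b a ha
end
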